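/- Fix n ≥ 1 and 1 ≤ k ≤ n, and let D ∈ D_n^k, i.e., D is an n-Dyck path passing through (k,k) but through no (k',k') with 1 ≤ k' < k. Let D_b ∈ D_{k−1} be obtained from the sub-path of D from (0,1) to (k−1,k) by decreasing all y-coordinates by 1, and let D_t ∈ D_{n−k} be obtained from the sub-path of D from (k,k) to (n,n) by decreasing all x- and y-coordinates by k. Then Γ'_D = Γ'_{n,k} · Γ'_{D_b} · Γ'_{D_t}[k]. -/

import Mathlib

/-! The first step of `D` is north, and the points where the path from it returns to the
diagonal are the `(k', k')` it passes through; hence `d = n`, `i = k`, `u = 0` there, giving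
`Γ'_{n,k}`, while step `2k - 1` is east. Every other north step lies in `D_b` (shifted by
`(0, 1)`) or in `D_t` (shifted by `(k, k)`), and its returns are those of the sub-path:
a return from inside the first arch cannot pass `(k, k)`, and the bound `k' ≤ n - u` in `K_N`
holds automatically for a return inside a balanced path. So its factor is the corresponding
factor of `Γ'_{D_b}` or of `Γ'_{D_t}[k]`. -/

open scoped RealInnerProductSpace
open MeasureTheory

attribute [local instance 0] Classical.propDecidable

noncomputable section

noncomputable def eVol (k : ℕ) {V : Type*} [NormedAddCommGroup V] [InnerProductSpace ℝ V]
    (A : Set V) : ℝ :=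
  if h : ∃ f : EuclideanSpace ℝ (Fin k) →ᵃⁱ[ℝ] V, A ⊆ Set.range ⇑f then
    (volume (⇑h.choose ⁻¹' A)).toReal
  else 0

noncomputable def alphaRoot (n i : ℕ) : EuclideanSpace ℝ (Fin (n+1)) :=
  if h : 1 ≤ i ∧ i ≤ n then
    EuclideanSpace.single (⟨i - 1, by omega⟩ : Fin (n+1)) 1 -
      EuclideanSpace.single (⟨i, by omega⟩ : Fin (n+1)) 1
  else 0

noncomputable def varpiWt (n i : ℕ) : EuclideanSpace ℝ (Fin (n+1)) :=
  (EuclideanSpace.equiv (Fin (n+1)) ℝ).symm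
    (fun t => (if (t : ℕ) + 1 ≤ i then (1:ℝ) else 0) - (i : ℝ) / (n+1))

noncomputable def permAct {m : ℕ} (w : Equiv.Perm (Fin m)) (v : EuclideanSpace ℝ (Fin m)) :
    EuclideanSpace ℝ (Fin m) :=
  (EuclideanSpace.equiv (Fin m) ℝ).symm (fun t => v (w⁻¹ t))

noncomputable def permutohedron (n : ℕ) (lam : EuclideanSpace ℝ (Fin (n+1))) :
    Set (EuclideanSpace ℝ (Fin (n+1))) :=
  convexHull ℝ {y | ∃ w : Equiv.Perm (Fin (n+1)), y = permAct w lam}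

noncomputable def sRefl (n i : ℕ) : Equiv.Perm (Fin (n+1)) :=
  if h : 1 ≤ i ∧ i ≤ n then
    Equiv.swap (⟨i - 1, by omega⟩ : Fin (n+1)) (⟨i, by omega⟩ : Fin (n+1))
  else 1

noncomputable def WJ (n : ℕ) (J : Set ℕ) : Subgroup (Equiv.Perm (Fin (n+1))) :=
  Subgroup.closure (sRefl n '' J)

def northCount (n : ℕ) (D : Fin (2*n) → Bool) (t : ℕ) : ℕ :=
  (Finset.univ.filter (fun s : Fin (2*n) => (s : ℕ) < t ∧ D s = true)).card

def IsDyck (n : ℕ) (D : Fin (2*n) → Bool) : Prop :=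
  northCount n D (2*n) = n ∧ ∀ t ≤ 2*n, t ≤ 2 * northCount n D t

instance (n : ℕ) : DecidablePred (IsDyck n) := fun D => by unfold IsDyck; infer_instance

def uOf (n : ℕ) (D : Fin (2*n) → Bool) (t : Fin (2*n)) : ℕ := (t : ℕ) - northCount n D (t : ℕ)

def KSet (n : ℕ) (D : Fin (2*n) → Bool) (t : Fin (2*n)) : Finset ℕ :=
  (Finset.Icc 1 (n - uOf n D t)).filter (fun k =>
    northCount n D ((t : ℕ) + 2*k) = northCount n D (t : ℕ) + k ∧
    ∀ m ∈ Finset.range (2*k+1), m + 2 * northCount n D (t : ℕ) ≤ 2 * northCount n D ((t : ℕ) + m))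

def dOf (n : ℕ) (D : Fin (2*n) → Bool) (t : Fin (2*n)) : ℕ := WithBot.unbotD 0 (KSet n D t).max
def iOf (n : ℕ) (D : Fin (2*n) → Bool) (t : Fin (2*n)) : ℕ := WithTop.untopD 0 (KSet n D t).min

noncomputable def cEnt (d i j : ℕ) : ℝ := ((min i j : ℕ) : ℝ) - (i * j : ℝ) / (d + 1)

noncomputable def Gamma' (d i u : ℕ) (x : ℕ → ℝ) : ℝ :=
  (1 / (d * Real.sqrt (cEnt d i i))) * (Nat.choose (d+1) i) *
    ∑ j ∈ Finset.Icc 1 d, cEnt d i j * x (j + u)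

noncomputable def GammaPrimeD (n : ℕ) (D : Fin (2*n) → Bool) (x : ℕ → ℝ) : ℝ :=
  ∏ t ∈ Finset.univ.filter (fun t => D t = true), Gamma' (dOf n D t) (iOf n D t) (uOf n D t) x

/-- `D ∈ D_n^k`: an `n`-Dyck path passing through `(k,k)` but through no `(k',k')`
with `1 ≤ k' < k`. -/
def InDnk (n k : ℕ) (D : Fin (2*n) → Bool) : Prop :=
  IsDyck n D ∧ northCount n D (2*k) = k ∧
    ∀ k', 1 ≤ k' → k' < k → northCount n D (2*k') ≠ k'

/-- `D_b`: the sub-path of `D` from `(0,1)` to `(k-1,k)` with `y`-coordinates decreased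
by `1`, i.e. the steps of `D` with indices `1, …, 2k-2`. -/
def Db (n k : ℕ) (D : Fin (2*n) → Bool) : Fin (2*(k-1)) → Bool :=
  fun s => if h : (s : ℕ) + 1 < 2*n then D ⟨(s : ℕ) + 1, h⟩ else false

/-- `D_t`: the sub-path of `D` from `(k,k)` to `(n,n)` with both coordinates decreased
by `k`, i.e. the steps of `D` with indices `2k, …, 2n-1`. -/
def Dt (n k : ℕ) (D : Fin (2*n) → Bool) : Fin (2*(n-k)) → Bool :=
  fun s => if h : (s : ℕ) + 2*k < 2*n then D ⟨(s : ℕ) + 2*k, h⟩ else false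

lemma unbotD_max_eq_of_isGreatest {α : Type*} [LinearOrder α] {s : Finset α} {a : α} (d : α)
    (h : IsGreatest (s : Set α) a) : WithBot.unbotD d s.max = a := by
  rw [le_antisymm (Finset.max_le fun b hb => WithBot.coe_le_coe.mpr (h.2 hb)) (Finset.le_max h.1)]
  rfl

lemma untopD_min_eq_of_isLeast {α : Type*} [LinearOrder α] {s : Finset α} {a : α} (d : α)
    (h : IsLeast (s : Set α) a) : WithTop.untopD d s.min = a := by
  rw [le_antisymm (Finset.min_le h.1) (Finset.le_min fun b hb => WithTop.coe_le_coe.mpr (h.2 hb))]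
  rfl

lemma Gamma'_shift (d i u e : ℕ) (x : ℕ → ℝ) :
    Gamma' d i (u + e) x = Gamma' d i u (fun j => x (j + e)) := by
  simp only [Gamma', add_assoc]

-- Padding with east steps beyond the end leaves all north-step counts unchanged.
def pathSeq (n : ℕ) (D : Fin (2*n) → Bool) (s : ℕ) : Bool :=
  if h : s < 2*n then D ⟨s, h⟩ else false

section Counting

variable {n : ℕ} {D : Fin (2*n) → Bool}

lemma pathSeq_of_lt {s : ℕ} (h : s < 2*n) : pathSeq n D s = D ⟨s, h⟩ := dif_pos h

lemma northCount_eq_count (t : ℕ) : northCount n D t = Nat.count (pathSeq n D ·) t := by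
  rw [Nat.count_eq_card_filter_range, northCount, ← Finset.card_map Fin.valEmbedding]
  congr 1
  ext s
  simp only [Finset.mem_map, Finset.mem_filter, Finset.mem_univ, true_and, Finset.mem_range,
    Fin.valEmbedding_apply]
  constructor
  · rintro ⟨s, ⟨hst, hs⟩, rfl⟩
    exact ⟨hst, by rwa [pathSeq_of_lt s.isLt]⟩
  · rintro ⟨hst, hs⟩
    by_cases h : s < 2*n
    · exact ⟨⟨s, h⟩, ⟨hst, by rwa [pathSeq_of_lt h] at hs⟩, rfl⟩
    · simp [pathSeq, h] at hs

lemma northCount_zero : northCount n D 0 = 0 := by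
  rw [northCount_eq_count, Nat.count_zero]

lemma northCount_mono : Monotone (northCount n D) := by
  intro t t' h
  simp only [northCount_eq_count]
  exact Nat.count_monotone _ h

lemma northCount_le_self (t : ℕ) : northCount n D t ≤ t := by
  rw [northCount_eq_count]
  exact Nat.count_le _

lemma northCount_add_le (t j : ℕ) : northCount n D (t + j) ≤ northCount n D t + j := by
  rw [northCount_eq_count, northCount_eq_count, Nat.count_add]
  exact Nat.add_le_add_left (Nat.count_le _) _

lemma northCount_le_total (t : ℕ) : northCount n D t ≤ northCount n D (2*n) :=
  Finset.card_le_card (Finset.monotone_filter_right _ fun s _ hs => ⟨s.isLt, hs.2⟩)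

lemma sub_northCount_mono {t t' : ℕ} (h : t ≤ t') :
    t - northCount n D t ≤ t' - northCount n D t' := by
  obtain ⟨j, rfl⟩ := Nat.exists_eq_add_of_le h
  have := northCount_add_le (D := D) t j
  have := northCount_le_self (D := D) t
  omega

lemma northCount_add_of_pathSeq_eq {m b : ℕ} {E : Fin (2*m) → Bool}
    (hE : ∀ s < 2*m, pathSeq m E s = pathSeq n D (s + b)) {s : ℕ} (hs : s ≤ 2*m) :
    northCount n D (s + b) = northCount m E s + northCount n D b := by
  simp only [northCount_eq_count]
  rw [Nat.count_add']
  congr 1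
  exact le_antisymm (Nat.count_mono_left fun j hj h => by rwa [hE j (by omega)])
    (Nat.count_mono_left fun j hj h => by rwa [← hE j (by omega)])

end Counting

/-- The condition defining `K_N`, apart from the range `1 ≤ k ≤ n - u`, for the step taken after
`a` steps of a path with north-step counts `c`. -/
def ReturnsAfter (c : ℕ → ℕ) (a k : ℕ) : Prop :=
  c (a + 2*k) = c a + k ∧ ∀ j ≤ 2*k, j + 2 * c a ≤ 2 * c (a + j)

lemma returnsAfter_add_iff {c c' : ℕ → ℕ} {a b k : ℕ}
    (h : ∀ s ≤ a + 2*k, c (s + b) = c' s + c b) :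
    ReturnsAfter c (a + b) k ↔ ReturnsAfter c' a k := by
  have hc : ∀ j ≤ 2*k, c (a + b + j) = c' (a + j) + c b := fun j hj => by
    rw [add_right_comm]
    exact h _ (by omega)
  unfold ReturnsAfter
  rw [hc _ le_rfl, h a (by omega)]
  refine and_congr (by omega) (forall₂_congr fun j hj => ?_)
  rw [hc j hj]
  omega

section KSet

variable {n : ℕ} {D : Fin (2*n) → Bool}

lemma mem_KSet {t : Fin (2*n)} {k : ℕ} :
    k ∈ KSet n D t ↔ (1 ≤ k ∧ k ≤ n - uOf n D t) ∧ ReturnsAfter (northCount n D) t k := by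
  simp [KSet, ReturnsAfter]

lemma add_two_mul_le_of_mem_KSet (hD : northCount n D (2*n) = n) {t : Fin (2*n)} {k : ℕ}
    (hk : k ∈ KSet n D t) : t + 2*k ≤ 2*n := by
  obtain ⟨⟨-, hku⟩, hret, -⟩ := mem_KSet.mp hk
  have := northCount_le_total (D := D) (t + 2*k)
  have := northCount_le_self (D := D) t
  unfold uOf at hku
  omega

lemma mem_KSet_of_val_eq_zero (hD : IsDyck n D) {t : Fin (2*n)} (ht : (t : ℕ) = 0) {k' : ℕ} :
    k' ∈ KSet n D t ↔ 1 ≤ k' ∧ k' ≤ n ∧ northCount n D (2*k') = k' := by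
  rw [mem_KSet, ReturnsAfter, uOf, ht, northCount_zero]
  simp only [zero_add, Nat.sub_zero, mul_zero, add_zero]
  refine ⟨fun ⟨⟨h1, h2⟩, h3, _⟩ => ⟨h1, h2, h3⟩, fun ⟨h1, h2, h3⟩ => ⟨⟨h1, h2⟩, h3, ?_⟩⟩
  exact fun j hj => hD.2 j (by omega)

variable {m b : ℕ} {E : Fin (2*m) → Bool} (hE : ∀ s < 2*m, pathSeq m E s = pathSeq n D (s + b))
include hE

lemma uOf_eq_add_of_pathSeq_eq {a : Fin (2*m)} {t : Fin (2*n)} (ht : (t : ℕ) = a + b) :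
    uOf n D t = uOf m E a + (b - northCount n D b) := by
  have := northCount_add_of_pathSeq_eq hE a.isLt.le
  have := northCount_le_self (D := D) b
  have := northCount_le_self (D := E) a
  unfold uOf
  rw [ht]
  omega

lemma mem_KSet_iff_of_pathSeq_eq (hbm : 2*m + b ≤ 2*n) (hD : northCount n D (2*n) = n)
    (hEm : northCount m E (2*m) = m) {a : Fin (2*m)} {t : Fin (2*n)} (ht : (t : ℕ) = a + b)
    {k : ℕ} : k ∈ KSet m E a ↔ k ∈ KSet n D t ∧ a + 2*k ≤ 2*m := by
  have hret (hk : a + 2*k ≤ 2*m) :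
      ReturnsAfter (northCount n D) t k ↔ ReturnsAfter (northCount m E) a k := by
    rw [ht]
    exact returnsAfter_add_iff fun s hs => northCount_add_of_pathSeq_eq hE (by omega)
  have hu := uOf_eq_add_of_pathSeq_eq hE ht
  have hEast : b - northCount n D b + m ≤ n := by
    have := sub_northCount_mono (D := D) hbm
    rw [northCount_add_of_pathSeq_eq hE le_rfl, hEm, hD] at this
    have := northCount_le_self (D := D) b
    omega
  constructor
  · intro hk
    have hle := add_two_mul_le_of_mem_KSet hEm hk
    obtain ⟨⟨hk1, hkm⟩, hkE⟩ := mem_KSet.mp hk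
    exact ⟨mem_KSet.mpr ⟨⟨hk1, by omega⟩, (hret hle).mpr hkE⟩, hle⟩
  · rintro ⟨hk, hle⟩
    obtain ⟨⟨hk1, -⟩, hkD⟩ := mem_KSet.mp hk
    have hkE := (hret hle).mp hkD
    have := sub_northCount_mono (D := E) hle
    rw [hkE.1, hEm] at this
    have := northCount_le_self (D := E) a
    exact mem_KSet.mpr ⟨⟨hk1, by unfold uOf; omega⟩, hkE⟩

end KSet

def stepFactor (n : ℕ) (D : Fin (2*n) → Bool) (x : ℕ → ℝ) (s : ℕ) : ℝ :=
  if h : s < 2*n then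
    if pathSeq n D s then Gamma' (dOf n D ⟨s, h⟩) (iOf n D ⟨s, h⟩) (uOf n D ⟨s, h⟩) x else 1
  else 1

lemma GammaPrimeD_eq_prod_range (n : ℕ) (D : Fin (2*n) → Bool) (x : ℕ → ℝ) :
    GammaPrimeD n D x = ∏ s ∈ Finset.range (2*n), stepFactor n D x s := by
  rw [GammaPrimeD, Finset.prod_filter, ← Fin.prod_univ_eq_prod_range]
  refine Finset.prod_congr rfl fun t _ => ?_
  rw [stepFactor, dif_pos t.isLt, pathSeq_of_lt t.isLt]

lemma stepFactor_add_of_pathSeq_eq {n m b : ℕ} {D : Fin (2*n) → Bool} {E : Fin (2*m) → Bool}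
    (hE : ∀ s < 2*m, pathSeq m E s = pathSeq n D (s + b)) (hbm : 2*m + b ≤ 2*n)
    (hK : ∀ (a : Fin (2*m)) (t : Fin (2*n)), (t : ℕ) = a + b → KSet m E a = KSet n D t)
    (x : ℕ → ℝ) {a : ℕ} (ha : a < 2*m) :
    stepFactor n D x (a + b) = stepFactor m E (fun j => x (j + (b - northCount n D b))) a := by
  have hab : a + b < 2*n := by omega
  rw [stepFactor, stepFactor, dif_pos hab, dif_pos ha, hE a ha, dOf, dOf, iOf, iOf,
    hK ⟨a, ha⟩ ⟨a + b, hab⟩ rfl, uOf_eq_add_of_pathSeq_eq hE (a := ⟨a, ha⟩) rfl, Gamma'_shift]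

lemma pathSeq_Db {n k : ℕ} (D : Fin (2*n) → Bool) {s : ℕ} (hs : s < 2*(k-1)) :
    pathSeq (k-1) (Db n k D) s = pathSeq n D (s + 1) := by
  rw [pathSeq, dif_pos hs]
  rfl

lemma pathSeq_Dt {n k : ℕ} (hkn : k ≤ n) (D : Fin (2*n) → Bool) (s : ℕ) :
    pathSeq (n-k) (Dt n k D) s = pathSeq n D (s + 2*k) := by
  by_cases hs : s < 2*(n-k)
  · rw [pathSeq, dif_pos hs]
    rfl
  · rw [pathSeq, dif_neg hs, pathSeq, dif_neg (by omega)]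

section FirstReturn

variable {n k : ℕ} {D : Fin (2*n) → Bool} (hkn : k ≤ n) (hD : InDnk n k D)
include hkn hD

lemma lt_two_mul_northCount {t : ℕ} (ht : 1 ≤ t) (htk : t < 2*k) :
    t < 2 * northCount n D t := by
  refine lt_of_le_of_ne (hD.1.2 t (by omega)) fun h => ?_
  exact hD.2.2 (northCount n D t) (by omega) (by omega) (by rw [← h])

lemma northCount_one (hk : 1 ≤ k) : northCount n D 1 = 1 := by
  have := lt_two_mul_northCount hkn hD le_rfl (by omega)
  have := northCount_le_self (D := D) 1
  omega

lemma northCount_two_mul_sub_one (hk : 1 ≤ k) : northCount n D (2*k - 1) = k := by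
  have := lt_two_mul_northCount hkn hD (t := 2*k - 1) (by omega) (by omega)
  have := northCount_mono (D := D) (show 2*k - 1 ≤ 2*k by omega)
  rw [hD.2.1] at this
  omega

lemma pathSeq_zero (hk : 1 ≤ k) : pathSeq n D 0 = true := by
  have h := northCount_one hkn hD hk
  rw [northCount_eq_count, Nat.count_one] at h
  simpa using h

lemma pathSeq_two_mul_sub_one (hk : 1 ≤ k) : pathSeq n D (2*k - 1) = false := by
  have h := northCount_two_mul_sub_one hkn hD hk
  have h2 := hD.2.1
  rw [show 2*k = 2*k - 1 + 1 by omega, northCount_eq_count, Nat.count_succ,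
    ← northCount_eq_count, h] at h2
  simpa using h2

lemma northCount_Db_total (hk : 1 ≤ k) : northCount (k-1) (Db n k D) (2*(k-1)) = k-1 := by
  have := northCount_add_of_pathSeq_eq (fun s hs => pathSeq_Db D hs) (le_refl (2*(k-1)))
  rw [show 2*(k-1) + 1 = 2*k - 1 by omega, northCount_two_mul_sub_one hkn hD hk,
    northCount_one hkn hD hk] at this
  omega

lemma northCount_Dt_total : northCount (n-k) (Dt n k D) (2*(n-k)) = n-k := by
  have := northCount_add_of_pathSeq_eq (fun s _ => pathSeq_Dt hkn D s) (le_refl (2*(n-k)))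
  rw [show 2*(n-k) + 2*k = 2*n by omega, hD.1.1, hD.2.1] at this
  omega

/-- A return from a point strictly inside the first arch ends inside it: crossing `(k, k)`
would bring the path below its starting height there. -/
lemma add_two_mul_le_of_mem_KSet_of_lt {t : Fin (2*n)} (ht1 : 1 ≤ (t : ℕ)) (htk : (t : ℕ) < 2*k)
    {k' : ℕ} (hk' : k' ∈ KSet n D t) : t + 2*k' ≤ 2*k - 1 := by
  obtain ⟨-, -, hret⟩ := mem_KSet.mp hk'
  have := lt_two_mul_northCount hkn hD ht1 htk
  by_contra! h
  have := hret (2*k - t) (by omega)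
  rw [Nat.add_sub_cancel' htk.le, hD.2.1] at this
  omega

lemma KSet_Db (hk : 1 ≤ k) {a : Fin (2*(k-1))} {t : Fin (2*n)} (ht : (t : ℕ) = a + 1) :
    KSet (k-1) (Db n k D) a = KSet n D t := by
  ext k'
  rw [mem_KSet_iff_of_pathSeq_eq (fun s hs => pathSeq_Db D hs) (by omega) hD.1.1
    (northCount_Db_total hkn hD hk) ht, and_iff_left_iff_imp]
  intro hk'
  have := add_two_mul_le_of_mem_KSet_of_lt hkn hD (by omega) (by omega) hk'
  omega

lemma KSet_Dt {a : Fin (2*(n-k))} {t : Fin (2*n)} (ht : (t : ℕ) = a + 2*k) :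
    KSet (n-k) (Dt n k D) a = KSet n D t := by
  ext k'
  rw [mem_KSet_iff_of_pathSeq_eq (fun s _ => pathSeq_Dt hkn D s) (by omega) hD.1.1
    (northCount_Dt_total hkn hD) ht, and_iff_left_iff_imp]
  intro hk'
  have := add_two_mul_le_of_mem_KSet hD.1.1 hk'
  omega

lemma stepFactor_zero (hk : 1 ≤ k) (x : ℕ → ℝ) : stepFactor n D x 0 = Gamma' n k 0 x := by
  have h0 : 0 < 2*n := by omega
  have hmem : ∀ k', _ ↔ _ := fun k' => mem_KSet_of_val_eq_zero hD.1 (t := ⟨0, h0⟩) rfl (k' := k')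
  have hd : dOf n D ⟨0, h0⟩ = n := unbotD_max_eq_of_isGreatest 0
    ⟨(hmem _).mpr ⟨by omega, le_rfl, hD.1.1⟩, fun k' hk' => ((hmem k').mp hk').2.1⟩
  have hi : iOf n D ⟨0, h0⟩ = k := untopD_min_eq_of_isLeast 0
    ⟨(hmem _).mpr ⟨hk, hkn, hD.2.1⟩, fun k' hk' => by
      obtain ⟨h1, -, h3⟩ := (hmem k').mp hk'
      by_contra! h
      exact hD.2.2 k' h1 h h3⟩
  rw [stepFactor, dif_pos h0, if_pos (pathSeq_zero hkn hD hk), hd, hi,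
    show uOf n D ⟨0, h0⟩ = 0 from Nat.zero_sub _]

lemma stepFactor_two_mul_sub_one (hk : 1 ≤ k) (x : ℕ → ℝ) : stepFactor n D x (2*k - 1) = 1 := by
  rw [stepFactor, dif_pos (by omega), if_neg (by simp [pathSeq_two_mul_sub_one hkn hD hk])]

lemma stepFactor_add_one (hk : 1 ≤ k) (x : ℕ → ℝ) {a : ℕ} (ha : a < 2*(k-1)) :
    stepFactor n D x (a + 1) = stepFactor (k-1) (Db n k D) x a := by
  rw [stepFactor_add_of_pathSeq_eq (fun s hs => pathSeq_Db D hs) (by omega)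
    (fun a t ht => KSet_Db hkn hD hk ht) x ha, northCount_one hkn hD hk]
  rfl

lemma stepFactor_add_two_mul (x : ℕ → ℝ) {a : ℕ} (ha : a < 2*(n-k)) :
    stepFactor n D x (a + 2*k) = stepFactor (n-k) (Dt n k D) (fun j => x (j + k)) a := by
  rw [stepFactor_add_of_pathSeq_eq (fun s _ => pathSeq_Dt hkn D s) (by omega)
    (fun a t ht => KSet_Dt hkn hD ht) x ha, hD.2.1, show 2*k - k = k by omega]

end FirstReturn

theorem gammaPrime_decomposition
    (n k : ℕ) (hk1 : 1 ≤ k) (hkn : k ≤ n)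
    (D : Fin (2*n) → Bool) (hD : InDnk n k D) (x : ℕ → ℝ) :
    GammaPrimeD n D x =
      Gamma' n k 0 x * GammaPrimeD (k-1) (Db n k D) x *
        GammaPrimeD (n-k) (Dt n k D) (fun j => x (j + k)) := by
  have hbot : ∏ a ∈ Finset.range (2*(k-1)), stepFactor n D x (a + 1) =
      GammaPrimeD (k-1) (Db n k D) x := by
    rw [GammaPrimeD_eq_prod_range]
    exact Finset.prod_congr rfl fun a ha =>
      stepFactor_add_one hkn hD hk1 x (Finset.mem_range.mp ha)
  have htop : ∏ a ∈ Finset.range (2*(n-k)), stepFactor n D x (2*(k-1) + 1 + 1 + a) =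
      GammaPrimeD (n-k) (Dt n k D) (fun j => x (j + k)) := by
    rw [GammaPrimeD_eq_prod_range]
    refine Finset.prod_congr rfl fun a ha => ?_
    rw [show 2*(k-1) + 1 + 1 + a = a + 2*k by omega]
    exact stepFactor_add_two_mul hkn hD x (Finset.mem_range.mp ha)
  rw [GammaPrimeD_eq_prod_range, show 2*n = 2*(k-1) + 1 + 1 + 2*(n-k) by omega,
    Finset.prod_range_add, Finset.prod_range_succ, Finset.prod_range_succ', hbot, htop,
    stepFactor_zero hkn hD hk1, show 2*(k-1) + 1 = 2*k - 1 by omega,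
    stepFactor_two_mul_sub_one hkn hD hk1, mul_one, mul_comm (GammaPrimeD _ _ _)]

end
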